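/- arXiv:2209.01697 — 2 statements merged into one kernel-verified Lean document; each statement's English description precedes it below -/
import Mathlib

section
/- Let p ≥ 1, let Σ and Σ̂ be real symmetric positive definite p×p matrices with inverses Θ = Σ⁻¹ and Θ̂ = Σ̂⁻¹, and let ι ∈ ℝ^p be the all-ones vector. Set a = ιᵀΘι/p, â = ιᵀΘ̂ι/p, w = Θι/(ιᵀΘι), and ŵ = Θ̂ι/(ιᵀΘ̂ι). Then the ℓ₁-distance between the weight vectors satisfies ‖ŵ − w‖₁ ≤ ( a·‖(Θ̂ − Θ)ι‖₁/p + |a − â|·‖Θι‖₁/p ) / ( |â|·a ). -/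
open Matrix

/-! Writing `t⁻¹ v - s⁻¹ u = t⁻¹ (v - u) + ((s - t) / (t s)) u`, the triangle inequality splits the
error of the normalised estimate `Θ̂ι / ιᵀΘ̂ι` into the error of `Θ̂ι` and the error of its
normalising constant. With `ιᵀΘι = p a` and `ιᵀΘ̂ι = p â`, both positive since `Σ⁻¹` and `Σ̂⁻¹` are
positive definite, the ℓ₁ form of this is the stated bound. -/

theorem norm_inv_smul_sub_inv_smul_le {𝕜 E : Type*} [NormedField 𝕜] [SeminormedAddCommGroup E]
    [NormedSpace 𝕜 E] {s t : 𝕜} (hs : s ≠ 0) (ht : t ≠ 0) (u v : E) :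
    ‖t⁻¹ • v - s⁻¹ • u‖ ≤ ‖t‖⁻¹ * ‖v - u‖ + ‖s - t‖ / ‖t * s‖ * ‖u‖ := by
  have hsplit : t⁻¹ • v - s⁻¹ • u = t⁻¹ • (v - u) + ((s - t) / (t * s)) • u := by
    have hcoef : (s - t) / (t * s) = t⁻¹ - s⁻¹ := by field_simp
    rw [hcoef, smul_sub, sub_smul]
    abel
  calc ‖t⁻¹ • v - s⁻¹ • u‖
      ≤ ‖t⁻¹ • (v - u)‖ + ‖((s - t) / (t * s)) • u‖ := hsplit ▸ norm_add_le _ _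
    _ = ‖t‖⁻¹ * ‖v - u‖ + ‖s - t‖ / ‖t * s‖ * ‖u‖ := by
      rw [norm_smul, norm_smul, norm_inv, norm_div]

theorem sum_abs_inv_mul_sub_inv_mul_le {ι : Type*} [Fintype ι] {s t : ℝ} (hs : s ≠ 0) (ht : t ≠ 0)
    (u v : ι → ℝ) :
    ∑ i, |t⁻¹ * v i - s⁻¹ * u i| ≤
      |t|⁻¹ * ∑ i, |v i - u i| + |s - t| / |t * s| * ∑ i, |u i| := by
  have h := norm_inv_smul_sub_inv_smul_le hs ht (WithLp.toLp 1 u) (WithLp.toLp 1 v)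
  simpa only [← WithLp.toLp_smul, ← WithLp.toLp_sub, PiLp.norm_eq_of_L1, Pi.sub_apply,
    Pi.smul_apply, smul_eq_mul, Real.norm_eq_abs] using h

/-- ℓ₁-bound on the error of estimated forecast combination weights:
`‖ŵ − w‖₁ ≤ (a·‖(Θ̂ − Θ)ι‖₁/p + |a − â|·‖Θι‖₁/p) / (|â|·a)`. -/
theorem stmt_2 (p : ℕ) (hp : 1 ≤ p)
    (Sig SigHat : Matrix (Fin p) (Fin p) ℝ) (hSig : Sig.PosDef) (hSigHat : SigHat.PosDef)
    (Θ ΘHat : Matrix (Fin p) (Fin p) ℝ) (hΘ : Θ = Sig⁻¹) (hΘHat : ΘHat = SigHat⁻¹)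
    (ι : Fin p → ℝ) (hι : ι = fun _ => (1 : ℝ))
    (a aHat : ℝ) (ha : a = ι ⬝ᵥ Θ.mulVec ι / p) (haHat : aHat = ι ⬝ᵥ ΘHat.mulVec ι / p)
    (w wHat : Fin p → ℝ)
    (hw : w = (ι ⬝ᵥ Θ.mulVec ι)⁻¹ • Θ.mulVec ι)
    (hwHat : wHat = (ι ⬝ᵥ ΘHat.mulVec ι)⁻¹ • ΘHat.mulVec ι) :
    ∑ i, |wHat i - w i| ≤
      (a * ((∑ i, |((ΘHat - Θ).mulVec ι) i|) / p) +
        |a - aHat| * ((∑ i, |(Θ.mulVec ι) i|) / p)) / (|aHat| * a) := by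
  have hι0 : ι ≠ 0 := by
    have : Nonempty (Fin p) := ⟨⟨0, hp⟩⟩
    exact hι ▸ Function.const_ne_zero.mpr one_ne_zero
  have hs : 0 < ι ⬝ᵥ Θ *ᵥ ι := by simpa [hΘ] using hSig.inv.dotProduct_mulVec_pos hι0
  have ht : 0 < ι ⬝ᵥ ΘHat *ᵥ ι := by simpa [hΘHat] using hSigHat.inv.dotProduct_mulVec_pos hι0
  have hp0 : (p : ℝ) ≠ 0 := by positivity
  subst hw hwHat ha haHat
  convert sum_abs_inv_mul_sub_inv_mul_le hs.ne' ht.ne' (Θ *ᵥ ι) (ΘHat *ᵥ ι) using 1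
  · rfl
  rw [sub_mulVec, ← sub_div, abs_div, abs_div, abs_mul, Nat.abs_cast, abs_of_pos hs,
    abs_of_pos ht]
  field_simp
  rfl
end

section
/- Let S and A be real symmetric p×p matrices and η > 0. Suppose (1/η)A − S = QΛQᵀ where Q is a p×p orthogonal matrix and Λ = diag(λ₁, …, λ_p). Define Θ = Q·D·Qᵀ where D = diag(v₁, …, v_p) with v_j = η(λ_j + √(λ_j² + 4/η))/2 for each j. Then Θ is symmetric positive definite, it is invertible, and it satisfies the first-order optimality condition S − Θ⁻¹ + (1/η)(Θ − A) = 0. -/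
/-!
Every matrix in sight is diagonalised by `Q`, so the matrix equation reduces to the scalar
equations `v / η - v⁻¹ = λ`, i.e. `v² - η λ v - η = 0`, whose positive root is the given `v`;
positivity of all the `v j` makes `Θ` positive definite.
-/

open Matrix

noncomputable def thetaEigenvalue (η l : ℝ) : ℝ := η * (l + √(l ^ 2 + 4 / η)) / 2

lemma thetaEigenvalue_pos {η : ℝ} (hη : 0 < η) (l : ℝ) : 0 < thetaEigenvalue η l := by
  have hsqrt : -l < √(l ^ 2 + 4 / η) :=
    (neg_le_abs l).trans_lt <| (Real.lt_sqrt (abs_nonneg l)).2 <| by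
      rw [sq_abs]; exact lt_add_of_pos_right _ (by positivity)
  have hsum : 0 < l + √(l ^ 2 + 4 / η) := by linarith
  unfold thetaEigenvalue
  positivity

lemma thetaEigenvalue_sq {η : ℝ} (hη : 0 < η) (l : ℝ) :
    thetaEigenvalue η l ^ 2 = η * (l * thetaEigenvalue η l + 1) := by
  have hs : η * √(l ^ 2 + 4 / η) ^ 2 = η * l ^ 2 + 4 := by
    rw [Real.sq_sqrt (by positivity)]; field_simp
  unfold thetaEigenvalue
  linear_combination η / 4 * hs

lemma thetaEigenvalue_div_sub_inv {η : ℝ} (hη : 0 < η) (l : ℝ) :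
    thetaEigenvalue η l / η - (thetaEigenvalue η l)⁻¹ = l := by
  have hw := (thetaEigenvalue_pos hη l).ne'
  field_simp
  linear_combination thetaEigenvalue_sq hη l

section OrthogonalConjugation

variable {n : Type*} [Fintype n] [DecidableEq n] {Q : Matrix n n ℝ}

lemma posDef_mul_diagonal_mul_transpose (hQ : Q * Qᵀ = 1) {d : n → ℝ} (hd : ∀ i, 0 < d i) :
    (Q * diagonal d * Qᵀ).PosDef := by
  have hQunit : IsUnit Q := (isUnit_iff_isUnit_det Q).2 (isUnit_det_of_right_inverse hQ)
  simpa [star_eq_conjTranspose] using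
    (hQunit.posDef_star_right_conjugate_iff (x := diagonal d)).2 (posDef_diagonal_iff.2 hd)

lemma inv_mul_diagonal_mul_transpose (hQ : Qᵀ * Q = 1) (hQ' : Q * Qᵀ = 1) {d : n → ℝ}
    (hd : ∀ i, d i ≠ 0) :
    (Q * diagonal d * Qᵀ)⁻¹ = Q * diagonal d⁻¹ * Qᵀ := by
  apply inv_eq_right_inv
  calc Q * diagonal d * Qᵀ * (Q * diagonal d⁻¹ * Qᵀ)
      = Q * (diagonal d * (Qᵀ * Q) * diagonal d⁻¹) * Qᵀ := by simp only [Matrix.mul_assoc]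
    _ = 1 := by simp [hQ, mul_inv_cancel₀ (hd _), hQ']

lemma mul_diagonal_mul_transpose_sub (d e : n → ℝ) :
    Q * diagonal d * Qᵀ - Q * diagonal e * Qᵀ = Q * diagonal (d - e) * Qᵀ := by
  rw [← Matrix.sub_mul, ← Matrix.mul_sub, diagonal_sub]; rfl

end OrthogonalConjugation

theorem stmt_8_general (p : ℕ) (S A : Matrix (Fin p) (Fin p) ℝ)
    (η : ℝ) (hη : 0 < η)
    (Q : Matrix (Fin p) (Fin p) ℝ) (hQ : Qᵀ * Q = 1) (hQ' : Q * Qᵀ = 1)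
    (lam : Fin p → ℝ)
    (hdecomp : (1 / η) • A - S = Q * Matrix.diagonal lam * Qᵀ)
    (v : Fin p → ℝ) (hv : v = fun j => η * (lam j + Real.sqrt (lam j ^ 2 + 4 / η)) / 2)
    (Θ : Matrix (Fin p) (Fin p) ℝ) (hΘ : Θ = Q * Matrix.diagonal v * Qᵀ) :
    Θ.PosDef ∧ IsUnit Θ.det ∧ S - Θ⁻¹ + (1 / η) • (Θ - A) = 0 := by
  have hv_eq : v = fun j => thetaEigenvalue η (lam j) := hv
  have hv_pos : ∀ j, 0 < v j := fun j => hv_eq ▸ thetaEigenvalue_pos hη (lam j)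
  have hPD : Θ.PosDef := hΘ ▸ posDef_mul_diagonal_mul_transpose hQ' hv_pos
  refine ⟨hPD, (isUnit_iff_isUnit_det Θ).1 hPD.isUnit, ?_⟩
  have hscalar : (1 / η) • v - v⁻¹ = lam := by
    funext j
    simpa [hv_eq, div_eq_inv_mul] using thetaEigenvalue_div_sub_inv hη (lam j)
  have hmatrix : (1 / η) • Θ - Θ⁻¹ = (1 / η) • A - S := by
    rw [hdecomp, hΘ, inv_mul_diagonal_mul_transpose hQ hQ' fun j => (hv_pos j).ne', ← hscalar,
      ← mul_diagonal_mul_transpose_sub, diagonal_smul, Matrix.mul_smul, Matrix.smul_mul]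
  linear_combination (norm := module) hmatrix

/-- The closed-form ADMM Θ-update: given symmetric `S`, `A`, `η > 0`, and an
eigendecomposition `(1/η)A − S = QΛQᵀ` with `Q` orthogonal, the matrix
`Θ = Q·diag(v)·Qᵀ` with `v_j = η(λ_j + √(λ_j² + 4/η))/2` is symmetric positive
definite, invertible, and satisfies `S − Θ⁻¹ + (1/η)(Θ − A) = 0`. -/
theorem stmt_8 (p : ℕ) (S A : Matrix (Fin p) (Fin p) ℝ)
    (hS : S.IsSymm) (hA : A.IsSymm) (η : ℝ) (hη : 0 < η)
    (Q : Matrix (Fin p) (Fin p) ℝ) (hQ : Qᵀ * Q = 1) (hQ' : Q * Qᵀ = 1)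
    (lam : Fin p → ℝ)
    (hdecomp : (1 / η) • A - S = Q * Matrix.diagonal lam * Qᵀ)
    (v : Fin p → ℝ) (hv : v = fun j => η * (lam j + Real.sqrt (lam j ^ 2 + 4 / η)) / 2)
    (Θ : Matrix (Fin p) (Fin p) ℝ) (hΘ : Θ = Q * Matrix.diagonal v * Qᵀ) :
    Θ.PosDef ∧ IsUnit Θ.det ∧ S - Θ⁻¹ + (1 / η) • (Θ - A) = 0 :=
  stmt_8_general p S A η hη Q hQ hQ' lam hdecomp v hv Θ hΘ
end
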